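/- arXiv:1901.10911 — 2 statements merged into one kernel-verified Lean document; each statement's English description precedes it below -/
import Mathlib

section
/- Let P be the Petersen graph, let v be a vertex of P with neighbours w1, w2, w3, and let e = xy be an edge of P not incident with v. Let T be the graph obtained from P − v by deleting the edge e and adding five new pendant vertices x*, y*, w1*, w2*, w3* together with the edges xx*, yy*, w1w1*, w2w2*, w3w3*. Then T admits a proper 3-edge-colouring, and for every proper 3-edge-colouring c of T with colours taken to be the three nonzero elements of Z2×Z2 the following holds: c(xx*) ≠ c(yy*), and there is a colour z and an ordering of the edges w1w1*, w2w2*, w3w3* such that their colours are c(xx*)+c(yy*), z, z. -/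
/-- A proper 3-edge-colouring of a simple graph: a colour for every unordered pair,
such that distinct edges of the graph sharing a vertex receive distinct colours. -/
def IsProper3EdgeColoring {V : Type*} (G : SimpleGraph V) (c : Sym2 V → Fin 3) : Prop :=
  ∀ e₁ e₂ : Sym2 V, e₁ ∈ G.edgeSet → e₂ ∈ G.edgeSet → e₁ ≠ e₂ →
    (∃ v, v ∈ e₁ ∧ v ∈ e₂) → c e₁ ≠ c e₂

/-- A graph admits a proper 3-edge-colouring. -/
def ThreeEdgeColorable {V : Type*} (G : SimpleGraph V) : Prop :=
  ∃ c : Sym2 V → Fin 3, IsProper3EdgeColoring G c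

/-- The vertices of the Petersen graph: the 2-element subsets of a 5-element set. -/
abbrev PetersenVert : Type := {s : Finset (Fin 5) // s.card = 2}

/-- The Petersen graph, as the Kneser graph of 2-element subsets of a 5-element set:
two subsets are adjacent when they are disjoint. -/
def petersen : SimpleGraph PetersenVert where
  Adj a b := Disjoint (a : Finset (Fin 5)) (b : Finset (Fin 5))
  symm := ⟨fun _ _ h => h.symm⟩
  loopless := by
    refine ⟨?_⟩
    intro a h
    have := disjoint_self.mp h
    have h2 := a.2
    rw [this] at h2
    simp at h2

/-- A proper 3-edge-colouring with colours the three nonzero elements of `Z2 × Z2`: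
every edge gets a nonzero colour and distinct edges sharing a vertex get distinct
colours. -/
def IsProperK4EdgeColoring {V : Type*} (G : SimpleGraph V)
    (c : Sym2 V → ZMod 2 × ZMod 2) : Prop :=
  (∀ e ∈ G.edgeSet, c e ≠ 0) ∧
  ∀ e₁ e₂ : Sym2 V, e₁ ∈ G.edgeSet → e₂ ∈ G.edgeSet → e₁ ≠ e₂ →
    (∃ v, v ∈ e₁ ∧ v ∈ e₂) → c e₁ ≠ c e₂

/-- The (2,3)-pole `T` obtained from the Petersen graph by removing the vertex `v`
(with neighbours `w1, w2, w3`) and severing the edge `xy` (not incident with `v`):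
five pendant vertices (indexed by `Fin 5`) are attached at `x, y, w1, w2, w3`. -/
def poleT (v x y w1 w2 w3 : PetersenVert) :
    SimpleGraph ({z : PetersenVert // z ≠ v} ⊕ Fin 5) :=
  SimpleGraph.fromRel (fun p q =>
    match p, q with
    | Sum.inl a, Sum.inl b => petersen.Adj a.1 b.1 ∧ s(a.1, b.1) ≠ s(x, y)
    | Sum.inl a, Sum.inr k =>
        (k = 0 ∧ a.1 = x) ∨ (k = 1 ∧ a.1 = y) ∨ (k = 2 ∧ a.1 = w1) ∨
        (k = 3 ∧ a.1 = w2) ∨ (k = 4 ∧ a.1 = w3)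
    | _, _ => False)


/-!
Colour with the nonzero elements of `Z2 × Z2`: at a cubic vertex the three colours are distinct
exactly when they sum to `0`. Summing over all vertices of `T` (the parity lemma), the five
dangling colours sum to `0`. If the dangling edges at `x` and `y` had the same colour, regluing
`xy` and `v` would give a 3-edge-colouring of the Petersen graph, which has none: viewed as
`GP(5,2)`, the spoke colours forced by the outer pentagon and by the inner pentagram never agree.
So `c(xx*) ≠ c(yy*)`, and the colours at `w1, w2, w3` are nonzero with nonzero sum
`c(xx*) + c(yy*)`; hence two of them coincide and the third is that sum.

For colourability, `Sym(5)` acts on `P` with two orbits of pairs `(v, e)`, and a single colouring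
of `P` that is proper away from `v` and `e` serves both orbits; the dangling edges at `x` and `y`
take the colours missing there.
-/

open Finset

abbrev K4 := ZMod 2 × ZMod 2

namespace K4

set_option synthInstance.maxSize 1000 in
theorem add_add_eq_zero_iff {a b c : K4} (ha : a ≠ 0) (hb : b ≠ 0) (hc : c ≠ 0) :
    a + b + c = 0 ↔ a ≠ b ∧ a ≠ c ∧ b ≠ c := by
  decide +revert

set_option synthInstance.maxSize 1000 in
theorem add_ne {a b : K4} (ha : a ≠ 0) (hb : b ≠ 0) (hab : a ≠ b) :
    a + b ≠ 0 ∧ a ≠ a + b ∧ b ≠ a + b := by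
  decide +revert

set_option synthInstance.maxSize 1000 in
theorem exists_multiset_eq {a b c : K4} (ha : a ≠ 0) (hb : b ≠ 0) (hc : c ≠ 0)
    (h : a + b + c ≠ 0) :
    ∃ z : K4, z ≠ 0 ∧ ({a, b, c} : Multiset K4) = {a + b + c, z, z} := by
  decide +revert

end K4

namespace SimpleGraph

variable {V : Type*} {G : SimpleGraph V}

theorem sum_sum_neighborFinset_eq_zero [Fintype V] [DecidableRel G.Adj] {M : Type*}
    [AddCommMonoid M] (hM : ∀ m : M, m + m = 0) (f : Sym2 V → M) :
    ∑ u, ∑ b ∈ G.neighborFinset u, f s(u, b) = 0 := by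
  classical
  simp_rw [neighborFinset_eq_filter, sum_filter]
  rw [← Fintype.sum_prod_type']
  refine sum_involution (fun p _ => p.swap) ?_ ?_ (by simp) (by simp)
  · rintro ⟨a, b⟩ -
    by_cases h : G.Adj a b
    · simp [h, h.symm, Sym2.eq_swap, hM]
    · have h' : ¬ G.Adj b a := fun h' => h h'.symm
      simp [h, h']
  · rintro ⟨a, b⟩ - hne heq
    simp only [Prod.swap_prod_mk, Prod.mk.injEq] at heq
    simp [heq.1] at hne

end SimpleGraph

section Coloring

variable {V W : Type*} {G : SimpleGraph V}

theorem pairwise_ne_of_forall_adj_ne {C : Type*} {f : Sym2 V → C}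
    (h : ∀ u b b', G.Adj u b → G.Adj u b' → b ≠ b' → f s(u, b) ≠ f s(u, b')) :
    ∀ e₁ e₂ : Sym2 V, e₁ ∈ G.edgeSet → e₂ ∈ G.edgeSet → e₁ ≠ e₂ →
      (∃ v, v ∈ e₁ ∧ v ∈ e₂) → f e₁ ≠ f e₂ := by
  rintro e₁ e₂ h₁ h₂ hne ⟨u, hu₁, hu₂⟩
  obtain ⟨b, rfl⟩ := Sym2.mem_iff_exists.mp hu₁
  obtain ⟨b', rfl⟩ := Sym2.mem_iff_exists.mp hu₂
  exact h u b b' h₁ h₂ (fun hb => hne (hb ▸ rfl))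

theorem IsProperK4EdgeColoring.ne {c : Sym2 V → K4} (hc : IsProperK4EdgeColoring G c) {u b b' : V}
    (hb : G.Adj u b) (hb' : G.Adj u b') (hne : b ≠ b') : c s(u, b) ≠ c s(u, b') :=
  hc.2 _ _ hb hb' (fun h => hne (Sym2.congr_right.mp h))
    ⟨u, Sym2.mem_mk_left _ _, Sym2.mem_mk_left _ _⟩

theorem IsProperK4EdgeColoring.sum_neighborFinset_eq_zero [Fintype V] [DecidableRel G.Adj]
    {c : Sym2 V → K4} (hc : IsProperK4EdgeColoring G c) {u : V} (hu : G.degree u = 3) :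
    ∑ b ∈ G.neighborFinset u, c s(u, b) = 0 := by
  classical
  obtain ⟨b₁, b₂, b₃, h₁₂, h₁₃, h₂₃, hN⟩ := card_eq_three.mp hu
  have hadj : ∀ b ∈ G.neighborFinset u, G.Adj u b := fun b hb => (G.mem_neighborFinset u b).mp hb
  have a₁ := hadj b₁ (by simp [hN])
  have a₂ := hadj b₂ (by simp [hN])
  have a₃ := hadj b₃ (by simp [hN])
  rw [hN, sum_insert (by simp [h₁₂, h₁₃]), sum_pair h₂₃, ← add_assoc,
    K4.add_add_eq_zero_iff (hc.1 _ a₁) (hc.1 _ a₂) (hc.1 _ a₃)]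
  exact ⟨hc.ne a₁ a₂ h₁₂, hc.ne a₁ a₃ h₁₃, hc.ne a₂ a₃ h₂₃⟩

theorem IsProperK4EdgeColoring.add_eq {c : Sym2 V → K4}
    (hc : IsProperK4EdgeColoring G c) {u b₁ b₂ b₃ : V} (h₁ : G.Adj u b₁) (h₂ : G.Adj u b₂)
    (h₃ : G.Adj u b₃) (h₁₂ : b₁ ≠ b₂) (h₁₃ : b₁ ≠ b₃) (h₂₃ : b₂ ≠ b₃) :
    c s(u, b₁) + c s(u, b₂) = c s(u, b₃) := by
  have h := (K4.add_add_eq_zero_iff (hc.1 _ h₁) (hc.1 _ h₂) (hc.1 _ h₃)).mpr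
    ⟨hc.ne h₁ h₂ h₁₂, hc.ne h₁ h₃ h₁₃, hc.ne h₂ h₃ h₂₃⟩
  rw [add_eq_zero_iff_eq_neg, CharTwo.neg_eq] at h
  exact h

/-- The parity lemma. -/
theorem IsProperK4EdgeColoring.sum_sum_eq_zero [Fintype V] [DecidableRel G.Adj]
    {c : Sym2 V → K4} (hc : IsProperK4EdgeColoring G c) (S : Finset V)
    (hS : ∀ u ∉ S, G.degree u = 3) :
    ∑ u ∈ S, ∑ b ∈ G.neighborFinset u, c s(u, b) = 0 := by
  classical
  rw [← G.sum_sum_neighborFinset_eq_zero (fun m : K4 => CharTwo.add_self_eq_zero m) c,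
    ← sum_add_sum_compl S, left_eq_add]
  exact sum_eq_zero fun u hu => hc.sum_neighborFinset_eq_zero (hS u (mem_compl.mp hu))

def toFin3 (a : K4) : Fin 3 := if a = (1, 0) then 0 else if a = (0, 1) then 1 else 2

theorem toFin3_injOn : Set.InjOn toFin3 {0}ᶜ := by
  intro a ha b hb h
  revert a b; decide

theorem IsProperK4EdgeColoring.threeEdgeColorable {c : Sym2 V → K4}
    (hc : IsProperK4EdgeColoring G c) : ThreeEdgeColorable G :=
  ⟨toFin3 ∘ c, fun e₁ e₂ h₁ h₂ hne hsh h =>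
    hc.2 e₁ e₂ h₁ h₂ hne hsh (toFin3_injOn (hc.1 e₁ h₁) (hc.1 e₂ h₂) h)⟩

def IsProperK4EdgeColoringOff (G : SimpleGraph V) (v : V) (e : Sym2 V) (f : Sym2 V → K4) :
    Prop :=
  (∀ e' ∈ G.edgeSet, f e' ≠ 0) ∧ ∀ u b b', u ≠ v → G.Adj u b → G.Adj u b' → b ≠ b' →
    s(u, b) ≠ e → s(u, b') ≠ e → f s(u, b) ≠ f s(u, b')

instance [Fintype V] [DecidableEq V] [DecidableRel G.Adj] {v : V} {e : Sym2 V}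
    {f : Sym2 V → K4} : Decidable (IsProperK4EdgeColoringOff G v e f) := by
  unfold IsProperK4EdgeColoringOff; infer_instance

theorem IsProperK4EdgeColoringOff.comp_iso {H : SimpleGraph W} (φ : G ≃g H) {v : V}
    {e : Sym2 V} {f : Sym2 W → K4} (hf : IsProperK4EdgeColoringOff H (φ v) (e.map φ) f) :
    IsProperK4EdgeColoringOff G v e (f ∘ Sym2.map φ) := by
  refine ⟨fun e' he' => hf.1 _ (φ.map_mem_edgeSet_iff.mpr he'), ?_⟩
  intro u b b' hu hb hb' hne he he'
  have hmap := Sym2.map.injective φ.injective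
  exact hf.2 (φ u) (φ b) (φ b') (φ.injective.ne hu) (φ.map_adj_iff.mpr hb)
    (φ.map_adj_iff.mpr hb') (φ.injective.ne hne) (hmap.ne he) (hmap.ne he')

end Coloring

namespace Petersen

instance : DecidableRel petersen.Adj := fun a b =>
  inferInstanceAs (Decidable (Disjoint a.1 b.1))

def pt (i j : Fin 5) (h : i ≠ j := by decide) : PetersenVert := ⟨{i, j}, card_pair h⟩

theorem degree_eq (u : PetersenVert) : petersen.degree u = 3 := by
  revert u; decide +kernel

theorem neighborFinset_eq {v w₁ w₂ w₃ : PetersenVert} (h₁ : petersen.Adj v w₁)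
    (h₂ : petersen.Adj v w₂) (h₃ : petersen.Adj v w₃) (h₁₂ : w₁ ≠ w₂) (h₁₃ : w₁ ≠ w₃)
    (h₂₃ : w₂ ≠ w₃) : petersen.neighborFinset v = {w₁, w₂, w₃} := by
  refine (eq_of_subset_of_card_le ?_ ?_).symm
  · simp [insert_subset_iff, h₁, h₂, h₃]
  · rw [SimpleGraph.card_neighborFinset_eq_degree, degree_eq,
      (card_eq_three.mpr ⟨w₁, w₂, w₃, h₁₂, h₁₃, h₂₃, rfl⟩)]

/-! The Petersen graph as the generalised Petersen graph `GP(5,2)`: an outer pentagon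
`outer j ~ outer (j+1)`, an inner pentagram `inner j ~ inner (j+2)` and spokes
`outer j ~ inner j`. -/

def outer (j : Fin 5) : PetersenVert := ⟨{2 * j, 2 * j + 1}, card_pair (by revert j; decide)⟩

def inner (j : Fin 5) : PetersenVert := ⟨{2 * j + 2, 2 * j + 4}, card_pair (by revert j; decide)⟩

set_option synthInstance.maxSize 1000 in
theorem not_compatible_pentagon_colorings : ∀ α : Fin 5 → K4,
    (∀ j, α j ≠ 0 ∧ α (j - 1) ≠ α j) → ∀ β : Fin 5 → K4, (∀ j, β j ≠ 0 ∧ β (j - 2) ≠ β j) →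
      ¬ ∀ j, α (j - 1) + α j = β (j - 2) + β j := by
  decide +kernel

theorem not_isProperK4EdgeColoring (f : Sym2 PetersenVert → K4) :
    ¬ IsProperK4EdgeColoring petersen f := by
  intro hf
  have hout (j : Fin 5) : petersen.Adj (outer j) (outer (j + 1)) := by revert j; decide +kernel
  have hin (j : Fin 5) : petersen.Adj (inner j) (inner (j + 2)) := by revert j; decide +kernel
  have hspoke (j : Fin 5) : petersen.Adj (outer j) (inner j) := by revert j; decide +kernel
  have hout' (j : Fin 5) : petersen.Adj (outer j) (outer (j - 1)) := by
    simpa using (hout (j - 1)).symm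
  have hin' (j : Fin 5) : petersen.Adj (inner j) (inner (j - 2)) := by
    simpa using (hin (j - 2)).symm
  have hne_out (j : Fin 5) : outer (j - 1) ≠ outer (j + 1) ∧ outer (j - 1) ≠ inner j ∧
      outer (j + 1) ≠ inner j := by revert j; decide +kernel
  have hne_in (j : Fin 5) : inner (j - 2) ≠ inner (j + 2) ∧ inner (j - 2) ≠ outer j ∧
      inner (j + 2) ≠ outer j := by revert j; decide +kernel
  have hα (j : Fin 5) : f s(outer (j - 1), outer (j - 1 + 1)) = f s(outer j, outer (j - 1)) := by
    rw [sub_add_cancel, Sym2.eq_swap]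
  have hβ (j : Fin 5) : f s(inner (j - 2), inner (j - 2 + 2)) = f s(inner j, inner (j - 2)) := by
    rw [sub_add_cancel, Sym2.eq_swap]
  refine not_compatible_pentagon_colorings (fun j => f s(outer j, outer (j + 1)))
    (fun j => ⟨hf.1 _ (hout j), ?_⟩) (fun j => f s(inner j, inner (j + 2)))
    (fun j => ⟨hf.1 _ (hin j), ?_⟩) fun j => ?_
  · rw [hα]; exact hf.ne (hout' j) (hout j) (hne_out j).1
  · rw [hβ]; exact hf.ne (hin' j) (hin j) (hne_in j).1
  · rw [hα, hβ, hf.add_eq (hout' j) (hout j) (hspoke j) (hne_out j).1 (hne_out j).2.1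
      (hne_out j).2.2, Sym2.eq_swap (a := outer j),
      hf.add_eq (hin' j) (hin j) (hspoke j).symm (hne_in j).1 (hne_in j).2.1 (hne_in j).2.2]

def perm (σ : Equiv.Perm (Fin 5)) : petersen ≃g petersen where
  toEquiv := (Equiv.finsetCongr σ).subtypeEquiv fun s => by simp
  map_rel_iff' {a b} := Finset.disjoint_map σ.toEmbedding

/-- Proper except at `pt 3 4` and at `pt 0 3`, whose edges to `pt 1 2` and `pt 1 4` share a
colour. The first of these edges meets a neighbour of `pt 3 4` and the second does not, so this one
colouring covers both `Sym(5)`-orbits of pairs (vertex, edge not incident to it). -/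
def offColoring (e : Sym2 PetersenVert) : K4 :=
  if e ∈ ({s(pt 0 1, pt 2 3), s(pt 0 2, pt 1 4), s(pt 0 3, pt 2 4), s(pt 0 4, pt 1 3),
      s(pt 1 2, pt 3 4)} : Finset _) then (1, 0)
  else if e ∈ ({s(pt 0 1, pt 2 4), s(pt 0 2, pt 1 3), s(pt 0 3, pt 1 2), s(pt 0 3, pt 1 4),
      s(pt 0 4, pt 2 3)} : Finset _) then (0, 1)
  else (1, 1)

set_option synthInstance.maxSize 1000 in
theorem isProperK4EdgeColoringOff_offColoring :
    IsProperK4EdgeColoringOff petersen (pt 3 4) s(pt 0 3, pt 1 2) offColoring ∧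
      IsProperK4EdgeColoringOff petersen (pt 3 4) s(pt 0 3, pt 1 4) offColoring := by
  decide +kernel

set_option synthInstance.maxSize 1000 in
theorem exists_perm_eq (v x y : PetersenVert) (hxy : petersen.Adj x y) (hxv : x ≠ v)
    (hyv : y ≠ v) : ∃ σ, perm σ v = pt 3 4 ∧
      (s(perm σ x, perm σ y) = s(pt 0 3, pt 1 2) ∨ s(perm σ x, perm σ y) = s(pt 0 3, pt 1 4)) := by
  revert v x y; decide +kernel

theorem exists_isProperK4EdgeColoringOff {v x y : PetersenVert} (hxy : petersen.Adj x y)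
    (hxv : x ≠ v) (hyv : y ≠ v) : ∃ f, IsProperK4EdgeColoringOff petersen v s(x, y) f := by
  obtain ⟨σ, hv, he⟩ := exists_perm_eq v x y hxy hxv hyv
  refine ⟨offColoring ∘ Sym2.map (perm σ), IsProperK4EdgeColoringOff.comp_iso _ ?_⟩
  rw [hv, Sym2.map_mk]
  rcases he with he | he <;> rw [he]
  exacts [isProperK4EdgeColoringOff_offColoring.1, isProperK4EdgeColoringOff_offColoring.2]

end Petersen

structure PoleConfig (v x y w₁ w₂ w₃ : PetersenVert) : Prop where
  adj₁ : petersen.Adj v w₁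
  adj₂ : petersen.Adj v w₂
  adj₃ : petersen.Adj v w₃
  ne₁₂ : w₁ ≠ w₂
  ne₁₃ : w₁ ≠ w₃
  ne₂₃ : w₂ ≠ w₃
  adj_xy : petersen.Adj x y
  x_ne : x ≠ v
  y_ne : y ≠ v

namespace PoleConfig

open Sum

variable {v x y w₁ w₂ w₃ : PetersenVert}

theorem adj_inl_inl {a b : {z // z ≠ v}} :
    (poleT v x y w₁ w₂ w₃).Adj (inl a) (inl b) ↔ petersen.Adj a.1 b.1 ∧ s(a.1, b.1) ≠ s(x, y) := by
  simp only [poleT, SimpleGraph.fromRel_adj, ne_eq, inl.injEq]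
  constructor
  · rintro ⟨-, h | ⟨h, h'⟩⟩
    exacts [h, ⟨h.symm, by rwa [Sym2.eq_swap]⟩]
  · rintro ⟨h, h'⟩
    exact ⟨fun hab => h.ne (congrArg Subtype.val hab), Or.inl ⟨h, h'⟩⟩

theorem adj_inl_inr {a : {z // z ≠ v}} {k : Fin 5} :
    (poleT v x y w₁ w₂ w₃).Adj (inl a) (inr k) ↔ a.1 = ![x, y, w₁, w₂, w₃] k := by
  simp only [poleT, SimpleGraph.fromRel_adj, ne_eq, reduceCtorEq, not_false_eq_true,
    or_false, true_and]
  fin_cases k <;> simp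

theorem not_adj_inr_inr {k l : Fin 5} : ¬ (poleT v x y w₁ w₂ w₃).Adj (inr k) (inr l) := by
  simp [poleT]

variable (w₁ w₂) in
def wIndex (u : PetersenVert) : Fin 5 := if u = w₁ then 2 else if u = w₂ then 3 else 4

variable (v x y w₁ w₂) in
/-- The neighbour of `inl u` in the pole that lies over the neighbour `b` of `u` in `P`. -/
def liftNbr (u : {z // z ≠ v}) (b : PetersenVert) : {z // z ≠ v} ⊕ Fin 5 :=
  if hb : b = v then inr (wIndex w₁ w₂ u.1)
  else if s(u.1, b) = s(x, y) then inr (if u.1 = x then 0 else 1)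
  else inl ⟨b, hb⟩

variable (v x y) in
/-- Each dangling vertex lies over the far end of the edge it replaces. -/
def proj : {z // z ≠ v} ⊕ Fin 5 → PetersenVert
  | inl a => a.1
  | inr k => ![y, x, v, v, v] k

theorem proj_liftNbr (u : {z // z ≠ v}) (b : PetersenVert) :
    proj v x y (liftNbr v x y w₁ w₂ u b) = b := by
  unfold liftNbr wIndex
  split_ifs <;> simp [proj, *]
  all_goals rcases Sym2.eq_iff.mp ‹s(_, b) = s(x, y)› with ⟨h₁, h₂⟩ | ⟨h₁, h₂⟩ <;> simp_all

theorem liftNbr_proj (h : PoleConfig v x y w₁ w₂ w₃) {u : {z // z ≠ v}}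
    {p : {z // z ≠ v} ⊕ Fin 5} (hp : (poleT v x y w₁ w₂ w₃).Adj (inl u) p) :
    liftNbr v x y w₁ w₂ u (proj v x y p) = p := by
  rcases p with b | k
  · rw [adj_inl_inl] at hp
    simp [liftNbr, proj, b.2, hp.2]
  · rw [adj_inl_inr] at hp
    fin_cases k <;> simp only [Fin.zero_eta, Fin.mk_one, Fin.reduceFinMk, Matrix.cons_val] at hp <;>
      simp [liftNbr, proj, wIndex, hp, h.x_ne, h.y_ne, h.adj_xy.ne.symm, h.ne₁₂.symm, h.ne₁₃.symm,
        h.ne₂₃.symm, Sym2.eq_swap]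

theorem att_ne (h : PoleConfig v x y w₁ w₂ w₃) (k : Fin 5) : ![x, y, w₁, w₂, w₃] k ≠ v := by
  fin_cases k
  exacts [h.x_ne, h.y_ne, h.adj₁.ne', h.adj₂.ne', h.adj₃.ne']

theorem adj_liftNbr (h : PoleConfig v x y w₁ w₂ w₃) {u : {z // z ≠ v}} {b : PetersenVert}
    (hb : petersen.Adj u.1 b) :
    (poleT v x y w₁ w₂ w₃).Adj (inl u) (liftNbr v x y w₁ w₂ u b) := by
  unfold liftNbr
  split_ifs with hbv he hux
  · rw [hbv] at hb
    have hu : u.1 ∈ petersen.neighborFinset v := by simpa using hb.symm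
    rw [Petersen.neighborFinset_eq h.adj₁ h.adj₂ h.adj₃ h.ne₁₂ h.ne₁₃ h.ne₂₃] at hu
    rw [adj_inl_inr, wIndex]
    simp only [mem_insert, mem_singleton] at hu
    rcases hu with hu | hu | hu <;> simp [hu, h.ne₁₂.symm, h.ne₁₃.symm, h.ne₂₃.symm]
  · simp [adj_inl_inr, hux]
  · rcases Sym2.eq_iff.mp he with ⟨h₁, -⟩ | ⟨h₁, -⟩
    exacts [absurd h₁ hux, by simp [adj_inl_inr, h₁]]
  · exact adj_inl_inl.mpr ⟨hb, he⟩

theorem adj_proj (h : PoleConfig v x y w₁ w₂ w₃) {u : {z // z ≠ v}}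
    {p : {z // z ≠ v} ⊕ Fin 5} (hp : (poleT v x y w₁ w₂ w₃).Adj (inl u) p) :
    petersen.Adj u.1 (proj v x y p) := by
  rcases p with b | k
  · exact (adj_inl_inl.mp hp).1
  · rw [adj_inl_inr] at hp
    fin_cases k <;> simp only [Fin.zero_eta, Fin.mk_one, Fin.reduceFinMk, Matrix.cons_val] at hp <;>
      simp [proj, hp, h.adj_xy, h.adj_xy.symm, h.adj₁.symm, h.adj₂.symm, h.adj₃.symm]

theorem neighborFinset_inl [DecidableRel (poleT v x y w₁ w₂ w₃).Adj]
    (h : PoleConfig v x y w₁ w₂ w₃) (u : {z // z ≠ v}) :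
    (poleT v x y w₁ w₂ w₃).neighborFinset (inl u) =
      (petersen.neighborFinset u.1).image (liftNbr v x y w₁ w₂ u) := by
  ext p
  simp only [SimpleGraph.mem_neighborFinset, mem_image]
  refine ⟨fun hp => ⟨_, adj_proj h hp, liftNbr_proj h hp⟩, ?_⟩
  rintro ⟨b, hb, rfl⟩
  exact adj_liftNbr h hb

theorem degree_inl [DecidableRel (poleT v x y w₁ w₂ w₃).Adj]
    (h : PoleConfig v x y w₁ w₂ w₃) (u : {z // z ≠ v}) :
    (poleT v x y w₁ w₂ w₃).degree (inl u) = 3 := by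
  rw [← SimpleGraph.card_neighborFinset_eq_degree, neighborFinset_inl h,
    card_image_of_injective _ (Function.LeftInverse.injective (proj_liftNbr u)),
    SimpleGraph.card_neighborFinset_eq_degree, Petersen.degree_eq]

theorem neighborFinset_inr [DecidableRel (poleT v x y w₁ w₂ w₃).Adj]
    (h : PoleConfig v x y w₁ w₂ w₃) (k : Fin 5) :
    (poleT v x y w₁ w₂ w₃).neighborFinset (inr k) = {inl ⟨![x, y, w₁, w₂, w₃] k, h.att_ne k⟩} := by
  ext p
  rcases p with a | l
  · simp [SimpleGraph.adj_comm _ (inr k), adj_inl_inr, Subtype.ext_iff]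
  · simp [not_adj_inr_inr]

theorem sum_pendant_eq_zero (h : PoleConfig v x y w₁ w₂ w₃)
    {c : Sym2 ({z // z ≠ v} ⊕ Fin 5) → K4} (hc : IsProperK4EdgeColoring (poleT v x y w₁ w₂ w₃) c) :
    c s(inl ⟨x, h.x_ne⟩, inr 0) + c s(inl ⟨y, h.y_ne⟩, inr 1) + c s(inl ⟨w₁, h.adj₁.ne'⟩, inr 2) +
      c s(inl ⟨w₂, h.adj₂.ne'⟩, inr 3) + c s(inl ⟨w₃, h.adj₃.ne'⟩, inr 4) = 0 := by
  classical
  have hpar := hc.sum_sum_eq_zero (univ.image inr) fun p hp => by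
    rcases p with u | k
    exacts [degree_inl h u, absurd (mem_image_of_mem _ (mem_univ k)) hp]
  simp only [sum_image fun _ _ _ _ h => inr_injective h, neighborFinset_inr h, sum_singleton,
    Fin.sum_univ_five] at hpar
  simpa [Sym2.eq_swap (a := inr _)] using hpar

variable (v x y w₁ w₂) in
/-- Glue the dangling edges of the pole back: the severed edge `xy` gets the colour `κ`. -/
def petersenColoring (c : Sym2 ({z // z ≠ v} ⊕ Fin 5) → K4) (κ : K4) :
    Sym2 PetersenVert → K4 :=
  Sym2.lift ⟨fun a b =>
    if s(a, b) = s(x, y) then κ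
    else if ha : a = v then
      (if hb : b = v then 0 else c s(inl ⟨b, hb⟩, liftNbr v x y w₁ w₂ ⟨b, hb⟩ a))
    else c s(inl ⟨a, ha⟩, liftNbr v x y w₁ w₂ ⟨a, ha⟩ b), fun a b => by
    have he' : s(b, a) = s(x, y) ↔ s(a, b) = s(x, y) := by rw [Sym2.eq_swap]
    by_cases he : s(a, b) = s(x, y)
    · simp only [he, he', if_true]
    simp only [he, he', if_false]
    by_cases ha : a = v <;> by_cases hb : b = v
    · subst ha hb; rfl
    · simp [ha, hb]
    · simp [ha, hb]
    · simp [ha, hb, liftNbr, he, Sym2.eq_swap]⟩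

theorem petersenColoring_mk (c : Sym2 ({z // z ≠ v} ⊕ Fin 5) → K4) (κ : K4)
    (u : {z // z ≠ v}) (b : PetersenVert) :
    petersenColoring v x y w₁ w₂ c κ s(u.1, b) =
      if s(u.1, b) = s(x, y) then κ else c s(inl u, liftNbr v x y w₁ w₂ u b) := by
  simp [petersenColoring, u.2]

theorem petersenColoring_eq (h : PoleConfig v x y w₁ w₂ w₃) {c : Sym2 ({z // z ≠ v} ⊕ Fin 5) → K4}
    (h01 : c s(inl ⟨x, h.x_ne⟩, inr 0) = c s(inl ⟨y, h.y_ne⟩, inr 1)) (u : {z // z ≠ v})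
    (b : PetersenVert) :
    petersenColoring v x y w₁ w₂ c (c s(inl ⟨x, h.x_ne⟩, inr 0)) s(u.1, b) =
      c s(inl u, liftNbr v x y w₁ w₂ u b) := by
  rw [petersenColoring_mk, ite_eq_right_iff]
  intro he
  have hlift (k : Fin 5) (hu : u.1 = ![x, y, w₁, w₂, w₃] k) (hb : b = proj v x y (inr k)) :
      liftNbr v x y w₁ w₂ u b = inr k := by
    rw [hb, liftNbr_proj h (adj_inl_inr.mpr hu)]
  rcases Sym2.eq_iff.mp he with ⟨hu, hb⟩ | ⟨hu, hb⟩
  · rw [hlift 0 hu hb, show u = ⟨x, h.x_ne⟩ from Subtype.ext hu]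
  · rw [hlift 1 hu hb, h01, show u = ⟨y, h.y_ne⟩ from Subtype.ext hu]

theorem petersenColoring_center_ne (h : PoleConfig v x y w₁ w₂ w₃)
    {c : Sym2 ({z // z ≠ v} ⊕ Fin 5) → K4}
    (hc : IsProperK4EdgeColoring (poleT v x y w₁ w₂ w₃) c)
    (h01 : c s(inl ⟨x, h.x_ne⟩, inr 0) = c s(inl ⟨y, h.y_ne⟩, inr 1)) {b b' : PetersenVert}
    (hb : petersen.Adj v b) (hb' : petersen.Adj v b') (hne : b ≠ b') :
    petersenColoring v x y w₁ w₂ c (c s(inl ⟨x, h.x_ne⟩, inr 0)) s(v, b) ≠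
      petersenColoring v x y w₁ w₂ c (c s(inl ⟨x, h.x_ne⟩, inr 0)) s(v, b') := by
  have hpend (k : Fin 5) : petersenColoring v x y w₁ w₂ c (c s(inl ⟨x, h.x_ne⟩, inr 0))
      s(![x, y, w₁, w₂, w₃] k, proj v x y (inr k)) = c s(inl ⟨_, h.att_ne k⟩, inr k) := by
    rw [petersenColoring_eq h h01 ⟨_, h.att_ne k⟩, liftNbr_proj h (adj_inl_inr.mpr rfl)]
  set f := petersenColoring v x y w₁ w₂ c (c s(inl ⟨x, h.x_ne⟩, inr 0))
  have e₁ : f s(v, w₁) = c s(inl ⟨w₁, h.adj₁.ne'⟩, inr 2) := by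
    rw [Sym2.eq_swap (a := v)]; exact hpend 2
  have e₂ : f s(v, w₂) = c s(inl ⟨w₂, h.adj₂.ne'⟩, inr 3) := by
    rw [Sym2.eq_swap (a := v)]; exact hpend 3
  have e₃ : f s(v, w₃) = c s(inl ⟨w₃, h.adj₃.ne'⟩, inr 4) := by
    rw [Sym2.eq_swap (a := v)]; exact hpend 4
  have hsum := sum_pendant_eq_zero h hc
  rw [h01, CharTwo.add_self_eq_zero, zero_add, K4.add_add_eq_zero_iff (hc.1 _ (adj_inl_inr.mpr rfl))
    (hc.1 _ (adj_inl_inr.mpr rfl)) (hc.1 _ (adj_inl_inr.mpr rfl))] at hsum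
  have hN := Petersen.neighborFinset_eq h.adj₁ h.adj₂ h.adj₃ h.ne₁₂ h.ne₁₃ h.ne₂₃
  replace hb : b ∈ ({w₁, w₂, w₃} : Finset _) := hN ▸ (petersen.mem_neighborFinset v b).mpr hb
  replace hb' : b' ∈ ({w₁, w₂, w₃} : Finset _) := hN ▸ (petersen.mem_neighborFinset v b').mpr hb'
  simp only [mem_insert, mem_singleton] at hb hb'
  rcases hb with rfl | rfl | rfl <;> rcases hb' with rfl | rfl | rfl <;>
    simp only [e₁, e₂, e₃] <;> first | exact absurd rfl hne | tauto

theorem isProperK4EdgeColoring_petersenColoring (h : PoleConfig v x y w₁ w₂ w₃)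
    {c : Sym2 ({z // z ≠ v} ⊕ Fin 5) → K4}
    (hc : IsProperK4EdgeColoring (poleT v x y w₁ w₂ w₃) c)
    (h01 : c s(inl ⟨x, h.x_ne⟩, inr 0) = c s(inl ⟨y, h.y_ne⟩, inr 1)) :
    IsProperK4EdgeColoring petersen
      (petersenColoring v x y w₁ w₂ c (c s(inl ⟨x, h.x_ne⟩, inr 0))) := by
  have hf := petersenColoring_eq h h01
  refine ⟨fun e he => ?_, pairwise_ne_of_forall_adj_ne fun u b b' hb hb' hne => ?_⟩
  · induction e using Sym2.ind with | _ a b => ?_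
    rw [SimpleGraph.mem_edgeSet] at he
    by_cases ha : a = v
    · subst ha
      rw [Sym2.eq_swap (b := b), hf ⟨b, he.ne'⟩]
      exact hc.1 _ (adj_liftNbr h he.symm)
    · rw [hf ⟨a, ha⟩]
      exact hc.1 _ (adj_liftNbr h he)
  · by_cases hu : u = v
    · subst hu
      exact petersenColoring_center_ne h hc h01 hb hb' hne
    · rw [hf ⟨u, hu⟩, hf ⟨u, hu⟩]
      exact hc.ne (adj_liftNbr h hb) (adj_liftNbr h hb')
        ((Function.LeftInverse.injective (proj_liftNbr _)).ne hne)

theorem pendant_ne (h : PoleConfig v x y w₁ w₂ w₃) {c : Sym2 ({z // z ≠ v} ⊕ Fin 5) → K4}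
    (hc : IsProperK4EdgeColoring (poleT v x y w₁ w₂ w₃) c) :
    c s(inl ⟨x, h.x_ne⟩, inr 0) ≠ c s(inl ⟨y, h.y_ne⟩, inr 1) := fun h01 =>
  Petersen.not_isProperK4EdgeColoring _ (isProperK4EdgeColoring_petersenColoring h hc h01)

variable (x y) in
def missingColor (f : Sym2 PetersenVert → K4) (a : PetersenVert) : K4 :=
  ∑ b ∈ petersen.neighborFinset a with s(a, b) ≠ s(x, y), f s(a, b)

theorem missingColor_ne {f : Sym2 PetersenVert → K4}
    (hf : IsProperK4EdgeColoringOff petersen v s(x, y) f) {u z : PetersenVert} (hu : u ≠ v)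
    (hz : petersen.Adj u z) (he : s(u, z) = s(x, y)) :
    missingColor x y f u ≠ 0 ∧
      ∀ b, petersen.Adj u b → b ≠ z → missingColor x y f u ≠ f s(u, b) := by
  have hfilter : {b ∈ petersen.neighborFinset u | s(u, b) ≠ s(x, y)} =
      (petersen.neighborFinset u).erase z := by
    ext b
    simp only [mem_filter, mem_erase, ← he, Ne, Sym2.congr_right]
    tauto
  have hcard : ((petersen.neighborFinset u).erase z).card = 2 := by
    rw [card_erase_of_mem (by simpa using hz), SimpleGraph.card_neighborFinset_eq_degree,
      Petersen.degree_eq]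
  obtain ⟨b₁, b₂, hne, hN⟩ := card_eq_two.mp hcard
  have hmem : ∀ b, b ∈ (petersen.neighborFinset u).erase z ↔ b ≠ z ∧ petersen.Adj u b := by
    simp
  have h₁ := (hmem b₁).mp (by simp [hN])
  have h₂ := (hmem b₂).mp (by simp [hN])
  have hne' (b) (hb : b ≠ z) : s(u, b) ≠ s(x, y) := by rwa [← he, Ne, Sym2.congr_right]
  have hsum : missingColor x y f u = f s(u, b₁) + f s(u, b₂) := by
    rw [missingColor, hfilter, hN, sum_pair hne]
  obtain ⟨hz₀, h₁₀, h₂₀⟩ := K4.add_ne (hf.1 _ h₁.2) (hf.1 _ h₂.2)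
    (hf.2 u b₁ b₂ hu h₁.2 h₂.2 hne (hne' b₁ h₁.1) (hne' b₂ h₂.1))
  refine ⟨hsum ▸ hz₀, fun b hb hbz => ?_⟩
  have hb' : b ∈ ({b₁, b₂} : Finset _) := hN ▸ (hmem b).mpr ⟨hbz, hb⟩
  rcases mem_insert.mp hb' with rfl | hb'
  · exact hsum ▸ h₁₀.symm
  rw [mem_singleton.mp hb']
  exact hsum ▸ h₂₀.symm

variable (v x y) in
/-- The dangling edges at `x` and `y` take the colour missing there. -/
def poleColoring (f : Sym2 PetersenVert → K4) : Sym2 ({z // z ≠ v} ⊕ Fin 5) → K4 :=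
  Sym2.lift ⟨fun p q => match p, q with
    | inl a, inl b => f s(a.1, b.1)
    | inl a, inr k | inr k, inl a => if k.val < 2 then missingColor x y f a.1 else f s(a.1, v)
    | inr _, inr _ => 0, fun p q => by
      rcases p with a | k <;> rcases q with b | l <;> simp [Sym2.eq_swap]⟩

theorem poleColoring_liftNbr (h : PoleConfig v x y w₁ w₂ w₃) (f : Sym2 PetersenVert → K4)
    (u : {z // z ≠ v}) (b : PetersenVert) :
    poleColoring v x y f s(inl u, liftNbr v x y w₁ w₂ u b) =
      if s(u.1, b) = s(x, y) then missingColor x y f u.1 else f s(u.1, b) := by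
  unfold liftNbr
  by_cases hbv : b = v
  · subst hbv
    have he : s(u.1, b) ≠ s(x, y) := fun he => by
      rcases Sym2.eq_iff.mp he with ⟨-, h'⟩ | ⟨-, h'⟩
      exacts [h.y_ne h'.symm, h.x_ne h'.symm]
    have hk : ¬ (wIndex w₁ w₂ u.1).val < 2 := by unfold wIndex; split_ifs <;> decide
    simp only [poleColoring, dite_true, Sym2.lift_mk, he, if_false, if_neg hk]
  · by_cases he : s(u.1, b) = s(x, y)
    · have hk : (if u.1 = x then (0 : Fin 5) else 1).val < 2 := by split_ifs <;> decide
      simp only [poleColoring, dif_neg hbv, he, if_true, Sym2.lift_mk, if_pos hk]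
    · simp [poleColoring, hbv, he]

theorem isProperK4EdgeColoring_poleColoring (h : PoleConfig v x y w₁ w₂ w₃)
    {f : Sym2 PetersenVert → K4} (hf : IsProperK4EdgeColoringOff petersen v s(x, y) f) :
    IsProperK4EdgeColoring (poleT v x y w₁ w₂ w₃) (poleColoring v x y f) := by
  set g : PetersenVert → PetersenVert → K4 := fun u b =>
    if s(u, b) = s(x, y) then missingColor x y f u else f s(u, b)
  have hat (u : {z // z ≠ v}) {q} (hq : (poleT v x y w₁ w₂ w₃).Adj (inl u) q) :
      poleColoring v x y f s(inl u, q) = g u.1 (proj v x y q) := by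
    conv_lhs => rw [← liftNbr_proj h hq]
    exact poleColoring_liftNbr h f u _
  have hg₀ (u : {z // z ≠ v}) {b} (hb : petersen.Adj u.1 b) : g u.1 b ≠ 0 := by
    simp only [g]
    split_ifs with he
    exacts [(missingColor_ne hf u.2 hb he).1, hf.1 _ hb]
  have hg (u : {z // z ≠ v}) {b b'} (hb : petersen.Adj u.1 b) (hb' : petersen.Adj u.1 b')
      (hne : b ≠ b') : g u.1 b ≠ g u.1 b' := by
    simp only [g]
    by_cases he : s(u.1, b) = s(x, y) <;> by_cases he' : s(u.1, b') = s(x, y) <;>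
      simp only [he, he', if_true, if_false]
    · exact absurd (Sym2.congr_right.mp (he.trans he'.symm)) hne
    · exact (missingColor_ne hf u.2 hb he).2 b' hb' hne.symm
    · exact ((missingColor_ne hf u.2 hb' he').2 b hb hne).symm
    · exact hf.2 u b b' u.2 hb hb' hne he he'
  refine ⟨fun e he => ?_, pairwise_ne_of_forall_adj_ne fun p q q' hq hq' hne => ?_⟩
  · induction e using Sym2.ind with | _ p q => ?_
    rw [SimpleGraph.mem_edgeSet] at he
    rcases p with u | k
    · rw [hat u he]
      exact hg₀ u (adj_proj h he)
    · rcases q with u | l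
      · rw [Sym2.eq_swap, hat u he.symm]
        exact hg₀ u (adj_proj h he.symm)
      · exact absurd he not_adj_inr_inr
  · rcases p with u | k
    · rw [hat u hq, hat u hq']
      refine hg u (adj_proj h hq) (adj_proj h hq') fun hpq => hne ?_
      rw [← liftNbr_proj h hq, ← liftNbr_proj h hq', hpq]
    · rcases q with a | l
      · rcases q' with a' | l'
        · refine absurd (congrArg inl (Subtype.ext ?_)) hne
          rw [SimpleGraph.adj_comm, adj_inl_inr] at hq hq'
          rw [hq, hq']
        · exact absurd hq' not_adj_inr_inr
      · exact absurd hq not_adj_inr_inr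

theorem threeEdgeColorable (h : PoleConfig v x y w₁ w₂ w₃) :
    ThreeEdgeColorable (poleT v x y w₁ w₂ w₃) :=
  have ⟨_, hf⟩ := Petersen.exists_isProperK4EdgeColoringOff h.adj_xy h.x_ne h.y_ne
  (isProperK4EdgeColoring_poleColoring h hf).threeEdgeColorable

theorem exists_pendant_multiset (h : PoleConfig v x y w₁ w₂ w₃)
    {c : Sym2 ({z // z ≠ v} ⊕ Fin 5) → K4} (hc : IsProperK4EdgeColoring (poleT v x y w₁ w₂ w₃) c) :
    ∃ z : K4, z ≠ 0 ∧ ({c s(inl ⟨w₁, h.adj₁.ne'⟩, inr 2), c s(inl ⟨w₂, h.adj₂.ne'⟩, inr 3),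
      c s(inl ⟨w₃, h.adj₃.ne'⟩, inr 4)} : Multiset K4) =
        {c s(inl ⟨x, h.x_ne⟩, inr 0) + c s(inl ⟨y, h.y_ne⟩, inr 1), z, z} := by
  have hpend (k : Fin 5) : c s(inl ⟨![x, y, w₁, w₂, w₃] k, h.att_ne k⟩, inr k) ≠ 0 :=
    hc.1 _ (adj_inl_inr.mpr rfl)
  have hsum : c s(inl ⟨w₁, h.adj₁.ne'⟩, inr 2) + c s(inl ⟨w₂, h.adj₂.ne'⟩, inr 3) +
      c s(inl ⟨w₃, h.adj₃.ne'⟩, inr 4) =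
        c s(inl ⟨x, h.x_ne⟩, inr 0) + c s(inl ⟨y, h.y_ne⟩, inr 1) := by
    rw [← sub_eq_zero, CharTwo.sub_eq_add, ← sum_pendant_eq_zero h hc]
    ring
  rw [← hsum]
  refine K4.exists_multiset_eq (hpend 2) (hpend 3) (hpend 4) fun h₀ => pendant_ne h hc ?_
  rwa [hsum, add_eq_zero_iff_eq_neg, CharTwo.neg_eq] at h₀

end PoleConfig

/-- The pole `T` is colourable, and in every proper 3-edge-colouring with colours the
nonzero elements of `Z2 × Z2` the two dangling edges at `x` and `y` get distinct
colours, while the three dangling edges at `w1, w2, w3` get the colours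
`c(x) + c(y), z, z` (in some order) for some colour `z`. -/
theorem poleT_coloring (v x y w1 w2 w3 : PetersenVert)
    (hw1 : petersen.Adj v w1) (hw2 : petersen.Adj v w2) (hw3 : petersen.Adj v w3)
    (hw12 : w1 ≠ w2) (hw13 : w1 ≠ w3) (hw23 : w2 ≠ w3)
    (hxy : petersen.Adj x y) (hxv : x ≠ v) (hyv : y ≠ v) :
    ThreeEdgeColorable (poleT v x y w1 w2 w3) ∧
    ∀ c : Sym2 ({z : PetersenVert // z ≠ v} ⊕ Fin 5) → ZMod 2 × ZMod 2,
      IsProperK4EdgeColoring (poleT v x y w1 w2 w3) c →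
      c s(Sum.inl ⟨x, hxv⟩, Sum.inr 0) ≠ c s(Sum.inl ⟨y, hyv⟩, Sum.inr 1) ∧
      ∃ z : ZMod 2 × ZMod 2, z ≠ 0 ∧
        ({c s(Sum.inl ⟨w1, hw1.ne'⟩, Sum.inr 2),
          c s(Sum.inl ⟨w2, hw2.ne'⟩, Sum.inr 3),
          c s(Sum.inl ⟨w3, hw3.ne'⟩, Sum.inr 4)} : Multiset (ZMod 2 × ZMod 2)) =
        {c s(Sum.inl ⟨x, hxv⟩, Sum.inr 0) + c s(Sum.inl ⟨y, hyv⟩, Sum.inr 1), z, z} := by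
  have h : PoleConfig v x y w1 w2 w3 := ⟨hw1, hw2, hw3, hw12, hw13, hw23, hxy, hxv, hyv⟩
  exact ⟨h.threeEdgeColorable, fun c hc => ⟨h.pendant_ne hc, h.exists_pendant_multiset hc⟩⟩
end

section
/- Let G be a cubic graph on n vertices containing a cycle of length c. If c is even then ρ(G) ≤ n − c, and if c is odd then ρ(G) ≤ n − c + 1. In particular, if the circumference deficit ξ(G) = n − c(G) (where c(G) is the circumference of G) is even then ξ(G) ≥ ρ(G), and in general ξ(G) ≥ ρ(G) − 1. -/
/-- A cubic graph: every vertex has exactly 3 neighbours. -/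
def IsCubic {V : Type*} (G : SimpleGraph V) : Prop :=
  ∀ v : V, Nat.card (G.neighborSet v) = 3

/-- A 2-connected graph: connected and with no cutvertex. -/
def TwoConnected {V : Type*} (G : SimpleGraph V) : Prop :=
  G.Connected ∧ ∀ v : V, (G.induce ({v}ᶜ : Set V)).Connected

/-- A snark: a 2-connected cubic graph admitting no proper 3-edge-colouring. -/
def IsSnark {V : Type*} (G : SimpleGraph V) : Prop :=
  IsCubic G ∧ TwoConnected G ∧ ¬ ThreeEdgeColorable G

/-- A 2-factor of `G`: a spanning subgraph in which every vertex has degree 2. -/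
def IsTwoFactor {V : Type*} (G H : SimpleGraph V) : Prop :=
  H ≤ G ∧ ∀ v : V, Nat.card (H.neighborSet v) = 2

/-- An even factor of `G`: a spanning subgraph in which every vertex has even degree. -/
def IsEvenFactor {V : Type*} (G H : SimpleGraph V) : Prop :=
  H ≤ G ∧ ∀ v : V, Even (Nat.card (H.neighborSet v))

/-- The number of connected components of odd order of a graph. -/
noncomputable def oddComponentCount {V : Type*} (H : SimpleGraph V) : ℕ :=
  Nat.card {C : H.ConnectedComponent // Odd (Nat.card C.supp)}

/-- The oddness of a graph: the smallest number of odd components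
(odd circuits) in a 2-factor. -/
noncomputable def oddness {V : Type*} (G : SimpleGraph V) : ℕ :=
  sInf {n | ∃ H : SimpleGraph V, IsTwoFactor G H ∧ oddComponentCount H = n}

/-- The weak oddness of a graph: the smallest number of odd components in an even factor. -/
noncomputable def weakOddness {V : Type*} (G : SimpleGraph V) : ℕ :=
  sInf {n | ∃ H : SimpleGraph V, IsEvenFactor G H ∧ oddComponentCount H = n}

/-- The resistance of a graph: the smallest number of vertices whose removal
yields a graph admitting a proper 3-edge-colouring. -/
noncomputable def resistance {V : Type*} (G : SimpleGraph V) : ℕ :=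
  sInf {n | ∃ S : Set V, S.ncard = n ∧ ThreeEdgeColorable (G.induce Sᶜ)}

/-- There is a cycle through the vertex `v`. -/
def HasCycleAt {V : Type*} (G : SimpleGraph V) (v : V) : Prop :=
  ∃ p : G.Walk v v, p.IsCycle

/-- A set of edges is cycle-separating if after deleting it at least two components
contain cycles. -/
def CycleSeparating {V : Type*} (G : SimpleGraph V) (s : Set (Sym2 V)) : Prop :=
  s ⊆ G.edgeSet ∧ ∃ u v : V, HasCycleAt (G.deleteEdges s) u ∧ HasCycleAt (G.deleteEdges s) v ∧
    ¬ (G.deleteEdges s).Reachable u v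

/-- `G` is cyclically `k`-edge-connected: no set of fewer than `k` edges is cycle-separating. -/
def CyclicallyEdgeConnected {V : Type*} (G : SimpleGraph V) (k : ℕ) : Prop :=
  ∀ s : Finset (Sym2 V), s.card < k → ¬ CycleSeparating G (↑s : Set (Sym2 V))

/-- The cycle rank `β(G) = |E(G)| - |V(G)| + 1` of a graph. -/
noncomputable def cycleRank {V : Type*} (G : SimpleGraph V) : ℕ :=
  Nat.card G.edgeSet + 1 - Nat.card V

/-- The cyclic connectivity of `G`: the largest `k ≤ β(G)` such that `G` is
cyclically `k`-edge-connected. -/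
noncomputable def cyclicConnectivity {V : Type*} (G : SimpleGraph V) : ℕ :=
  sSup {k | k ≤ cycleRank G ∧ CyclicallyEdgeConnected G k}

/-- The circumference of a graph: the maximum length of a cycle. -/
noncomputable def circumference {V : Type*} (G : SimpleGraph V) : ℕ :=
  sSup {n | ∃ (v : V) (p : G.Walk v v), p.IsCycle ∧ p.length = n}

/-!
Colour the edges of a cycle `C` by the parity of their position along `C`. This is proper on
`C` when `C` is even; when `C` is odd only the first and last edges clash, and both disappear
once the base vertex `u` of `C` is deleted. In a graph of maximum degree three every vertex of
`C` has at most one neighbour besides its two cycle neighbours, so the remaining edges among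
the vertices of `C` form a matching and receive the third colour. Hence deleting the `n - c`
vertices off `C`, together with `u` when `c` is odd, leaves a 3-edge-colourable graph.
For the circumference statements apply this to a longest cycle: `n` is even by the handshake
lemma, so an even deficit forces a longest cycle of even length.
-/

section

variable {V : Type*} {G : SimpleGraph V}

theorem threeEdgeColorable_of_twoColoring_of_matching {W : Type*} {H F : SimpleGraph W}
    (c : Sym2 W → Fin 2)
    (hc : ∀ e₁ ∈ F.edgeSet, ∀ e₂ ∈ F.edgeSet, e₁ ≠ e₂ → (∃ v, v ∈ e₁ ∧ v ∈ e₂) → c e₁ ≠ c e₂)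
    (hmatch : ∀ ⦃v w₁ w₂⦄, H.Adj v w₁ → H.Adj v w₂ → ¬ F.Adj v w₁ → ¬ F.Adj v w₂ → w₁ = w₂) :
    ThreeEdgeColorable H := by
  classical
  refine ⟨fun e => if e ∈ F.edgeSet then (c e).castSucc else Fin.last 2, ?_⟩
  rintro e₁ e₂ h₁ h₂ hne ⟨v, hv₁, hv₂⟩
  by_cases hF₁ : e₁ ∈ F.edgeSet <;> by_cases hF₂ : e₂ ∈ F.edgeSet <;>
    simp only [hF₁, hF₂, if_true, if_false]
  · exact fun h => hc e₁ hF₁ e₂ hF₂ hne ⟨v, hv₁, hv₂⟩ (Fin.castSucc_injective _ h)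
  · exact Fin.castSucc_ne_last _
  · exact (Fin.castSucc_ne_last _).symm
  · obtain ⟨w₁, rfl⟩ := Sym2.mem_iff_exists.mp hv₁
    obtain ⟨w₂, rfl⟩ := Sym2.mem_iff_exists.mp hv₂
    obtain rfl : w₁ = w₂ := hmatch h₁ h₂ hF₁ hF₂
    exact absurd rfl hne

lemma resistance_le_ncard {S : Set V} (h : ThreeEdgeColorable (G.induce Sᶜ)) :
    resistance G ≤ S.ncard :=
  Nat.sInf_le ⟨S, rfl, h⟩

namespace SimpleGraph.Walk

variable {u : V} {p : G.Walk u u}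

lemma IsCycle.getVert_eq_getVert_iff (hp : p.IsCycle) {i j : ℕ} (hi : i ≤ p.length)
    (hj : j ≤ p.length) :
    p.getVert i = p.getVert j ↔ i = j ∨ (i = 0 ∧ j = p.length) ∨ (i = p.length ∧ j = 0) := by
  refine ⟨fun h => ?_, by rintro (rfl | ⟨rfl, rfl⟩ | ⟨rfl, rfl⟩) <;> simp⟩
  by_cases hlt : i < p.length ∧ j < p.length
  · exact Or.inl (hp.getVert_injOn' (by simp; omega) (by simp; omega) h)
  · have hi' := hp.getVert_endpoint_iff hi
    have hj' := hp.getVert_endpoint_iff hj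
    have hend := p.getVert_length
    grind

lemma IsCycle.mod_two_ne_of_edges_meet (hp : p.IsCycle) {i j : ℕ} (hi : i < p.length)
    (hj : j < p.length) (hij : i ≠ j) {x : V} (hx₁ : x ∈ s(p.getVert i, p.getVert (i + 1)))
    (hx₂ : x ∈ s(p.getVert j, p.getVert (j + 1)))
    (hpar : Even p.length ∨ u ∉ s(p.getVert i, p.getVert (i + 1))) : i % 2 ≠ j % 2 := by
  have hu : i = 0 ∨ i + 1 = p.length → u ∈ s(p.getVert i, p.getVert (i + 1)) := by
    rintro (h | h) <;> simp [h]
  have hgv := fun a b ha hb => hp.getVert_eq_getVert_iff (i := a) (j := b) ha hb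
  rw [Sym2.mem_iff] at hx₁ hx₂
  rcases hx₁ with rfl | rfl <;> rcases hx₂ with h | h <;>
    · rw [hgv _ _ (by omega) (by omega)] at h
      rcases hpar with ⟨k, hk⟩ | hpar
      · omega
      · have := mt hu hpar
        omega

lemma IsCycle.eq_of_not_toSubgraph_adj (hp : p.IsCycle) {v w₁ w₂ : V} (hv : v ∈ p.support)
    (hdeg : (G.neighborSet v).encard ≤ 3) (h₁ : G.Adj v w₁) (h₂ : G.Adj v w₂)
    (h₁' : ¬ p.toSubgraph.Adj v w₁) (h₂' : ¬ p.toSubgraph.Adj v w₂) : w₁ = w₂ := by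
  by_contra hne
  have hfin : (G.neighborSet v).Finite := Set.finite_of_encard_le_coe hdeg
  have hsub : insert w₁ (insert w₂ (p.toSubgraph.neighborSet v)) ⊆ G.neighborSet v := by
    rintro w (rfl | rfl | hw)
    exacts [h₁, h₂, p.toSubgraph.neighborSet_subset v hw]
  have hcycle : (p.toSubgraph.neighborSet v).encard = 2 := by
    rw [← (hfin.subset (p.toSubgraph.neighborSet_subset v)).cast_ncard_eq,
      hp.ncard_neighborSet_toSubgraph_eq_two hv]
    rfl
  have := (Set.encard_le_encard hsub).trans hdeg
  rw [Set.encard_insert_of_notMem (by simp [hne, h₁']),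
    Set.encard_insert_of_notMem (show w₂ ∉ p.toSubgraph.neighborSet v from h₂'), hcycle] at this
  norm_num at this

lemma getVert_idxOf_edges [DecidableEq V] {v : V} {q : G.Walk u v} {e : Sym2 V}
    (he : e ∈ q.edges) : s(q.getVert (q.edges.idxOf e), q.getVert (q.edges.idxOf e + 1)) = e := by
  rw [← q.getElem_edges (List.idxOf_lt_length_of_mem he), List.getElem_idxOf]

theorem IsCycle.threeEdgeColorable_induce (hp : p.IsCycle)
    (hdeg : ∀ v, (G.neighborSet v).encard ≤ 3) {S : Set V} (hS : S ⊆ {v | v ∈ p.support})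
    (hpar : Even p.length ∨ u ∉ S) : ThreeEdgeColorable (G.induce S) := by
  classical
  set F := p.toSubgraph.spanningCoe.induce S
  have hedges : ∀ e ∈ F.edgeSet, e.map (↑) ∈ p.edges := by
    intro e he
    induction e using Sym2.ind
    exact adj_toSubgraph_iff_mem_edges.mp he
  refine threeEdgeColorable_of_twoColoring_of_matching (F := F)
    (fun e => ⟨p.edges.idxOf (e.map (↑)) % 2, Nat.mod_lt _ two_pos⟩) ?_ ?_
  · rintro e₁ he₁ e₂ he₂ hne ⟨x, hx₁, hx₂⟩
    have h₁ := hedges e₁ he₁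
    have h₂ := hedges e₂ he₂
    rw [ne_eq, Fin.mk.injEq]
    refine hp.mod_two_ne_of_edges_meet (x := x) ?_ ?_ ?_ ?_ ?_ ?_
    · simpa using List.idxOf_lt_length_of_mem h₁
    · simpa using List.idxOf_lt_length_of_mem h₂
    · rw [ne_eq, List.idxOf_inj h₁]
      exact fun h => hne (Sym2.map.injective Subtype.val_injective h)
    · rw [getVert_idxOf_edges h₁]
      exact Sym2.mem_map.mpr ⟨x, hx₁, rfl⟩
    · rw [getVert_idxOf_edges h₂]
      exact Sym2.mem_map.mpr ⟨x, hx₂, rfl⟩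
    · rw [getVert_idxOf_edges h₁, Sym2.mem_map]
      refine hpar.imp_right fun hu => ?_
      rintro ⟨w, -, rfl⟩
      exact hu w.2
  · intro v w₁ w₂ h₁ h₂ h₁' h₂'
    exact Subtype.ext (hp.eq_of_not_toSubgraph_adj (hS v.2) (hdeg v) h₁ h₂ h₁' h₂')

lemma IsCycle.ncard_support (hp : p.IsCycle) : {v | v ∈ p.support}.ncard = p.length := by
  classical
  have htail : {v | v ∈ p.support} = ↑p.support.tail.toFinset := by
    ext v
    rw [Set.mem_ofPred_eq, ← p.cons_tail_support, Finset.mem_coe, List.mem_toFinset, List.mem_cons,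
      List.tail_cons, or_iff_right_iff_imp]
    rintro rfl
    exact p.end_mem_tail_support hp.not_nil
  rw [htail, Set.ncard_coe_finset, List.toFinset_card_of_nodup hp.support_nodup,
    List.length_tail, length_support, Nat.add_sub_cancel]

lemma IsCycle.length_le_card [Finite V] (hp : p.IsCycle) : p.length ≤ Nat.card V :=
  hp.ncard_support ▸ Set.ncard_le_card _

lemma IsCycle.resistance_le_card_sub_length_of_even [Finite V] (hp : p.IsCycle)
    (hdeg : ∀ v, (G.neighborSet v).encard ≤ 3) (he : Even p.length) :
    resistance G ≤ Nat.card V - p.length := by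
  have h := hp.threeEdgeColorable_induce hdeg subset_rfl (Or.inl he)
  have := resistance_le_ncard (S := {v | v ∈ p.support}ᶜ) (by rwa [compl_compl])
  rwa [Set.ncard_compl, hp.ncard_support] at this

lemma IsCycle.resistance_le_card_sub_length_add_one [Finite V] (hp : p.IsCycle)
    (hdeg : ∀ v, (G.neighborSet v).encard ≤ 3) :
    resistance G ≤ Nat.card V - p.length + 1 := by
  have h := hp.threeEdgeColorable_induce hdeg (S := {v | v ∈ p.support} \ {u}) Set.sdiff_subset
    (Or.inr fun h => h.2 rfl)
  have hcard := Set.ncard_sdiff_singleton_of_mem (s := {v | v ∈ p.support}) p.start_mem_support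
  have := hp.three_le_length
  have := hp.length_le_card
  have := resistance_le_ncard (S := ({v | v ∈ p.support} \ {u})ᶜ) (by rwa [compl_compl])
  rw [Set.ncard_compl, hcard, hp.ncard_support] at this
  omega

end SimpleGraph.Walk

open SimpleGraph

lemma exists_isCycle_length_eq_circumference [Finite V] {c : ℕ}
    (hc : ∃ (v : V) (p : G.Walk v v), p.IsCycle ∧ p.length = c) :
    ∃ (v : V) (p : G.Walk v v), p.IsCycle ∧ p.length = circumference G := by
  refine Nat.sSup_mem (s := {n | ∃ (v : V) (p : G.Walk v v), p.IsCycle ∧ p.length = n})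
    ⟨c, hc⟩ ⟨Nat.card V, ?_⟩
  rintro _ ⟨_, _, hp, rfl⟩
  exact hp.length_le_card

lemma IsCubic.encard_neighborSet (h : IsCubic G) (v : V) : (G.neighborSet v).encard = 3 := by
  have := h v
  rwa [Nat.card_coe_set_eq, Set.ncard_def, ENat.toNat_eq_iff_eq_natCast] at this

lemma IsCubic.even_card [Fintype V] (h : IsCubic G) : Even (Fintype.card V) := by
  classical
  have hdeg : ∀ v, G.degree v = 3 := fun v => by
    rw [← card_neighborSet_eq_degree, ← Nat.card_eq_fintype_card, h v]
  have := G.sum_degrees_eq_twice_card_edges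
  simp only [hdeg, Finset.sum_const, Finset.card_univ, smul_eq_mul] at this
  rw [Nat.even_iff]
  omega

end

/-- A cubic graph on `n` vertices containing a cycle of length `c` has resistance at
most `n - c` if `c` is even, and at most `n - c + 1` if `c` is odd. In particular the
circumference deficit `ξ(G) = n - circumference G` satisfies `ξ(G) ≥ ρ(G)` when it is
even, and `ξ(G) ≥ ρ(G) - 1` in general. -/
theorem resistance_le_circumference_deficit {V : Type*} [Fintype V]
    (G : SimpleGraph V) (hcubic : IsCubic G) (n : ℕ) (hn : n = Fintype.card V)
    (c : ℕ) (hc : ∃ (v : V) (p : G.Walk v v), p.IsCycle ∧ p.length = c) :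
    ((Even c → resistance G ≤ n - c) ∧ (Odd c → resistance G ≤ n - c + 1)) ∧
    (Even (n - circumference G) → resistance G ≤ n - circumference G) ∧
    resistance G - 1 ≤ n - circumference G := by
  have hdeg v := (hcubic.encard_neighborSet v).le
  have hneven : Even n := hn ▸ hcubic.even_card
  rw [← Nat.card_eq_fintype_card] at hn
  obtain ⟨_, q, hq, hqc⟩ := exists_isCycle_length_eq_circumference hc
  obtain ⟨_, p, hp, rfl⟩ := hc
  subst hn
  rw [← hqc]
  refine ⟨⟨hp.resistance_le_card_sub_length_of_even hdeg,
    fun _ => hp.resistance_le_card_sub_length_add_one hdeg⟩, fun heven => ?_, ?_⟩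
  · refine hq.resistance_le_card_sub_length_of_even hdeg ?_
    rwa [Nat.even_sub hq.length_le_card, iff_true_left hneven] at heven
  · have := hq.resistance_le_card_sub_length_add_one hdeg
    omega
end
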